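/- Let F be a strictly balanced graph with k vertices and l edges, and let A and B be two graphs (subgraphs of a common graph) such that B is isomorphic to F, V(A) ∩ V(B) ≠ ∅, and exactly t vertices of B do not belong to V(A), where 1 ≤ t < k. Then k·e(A ∪ B) ≥ k·e(A) + t·l + 1, where A ∪ B denotes the graph whose vertex set is V(A) ∪ V(B) and whose edge set is E(A) ∪ E(B). -/

import Mathlib

open MeasureTheory Filter Asymptotics

/-- Vertices of the complete distance graph `G(n, n/2, n/4)`: 0/1-vectors of length `n`
(encoded as the set of coordinates equal to 1) with exactly `n/2` ones. -/
def DV (n : ℕ) : Type := {s : Finset (Fin n) // s.card = n / 2}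

instance (n : ℕ) : Fintype (DV n) := by unfold DV; infer_instance
instance (n : ℕ) : DecidableEq (DV n) := by unfold DV; infer_instance

/-- The complete distance graph: two vertices are adjacent iff their Euclidean inner
product (= cardinality of the intersection of the corresponding sets) equals `n/4`. -/
def distGraph (n : ℕ) : SimpleGraph (DV n) where
  Adj x y := x ≠ y ∧ (x.1 ∩ y.1).card = n / 4
  symm := ⟨fun x y h => ⟨h.1.symm, by rw [Finset.inter_comm]; exact h.2⟩⟩
  loopless := ⟨fun x h => h.1 rfl⟩

/-- `N = C(n, n/2)`, the number of vertices of the distance graph. -/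
def NN (n : ℕ) : ℕ := n.choose (n / 2)

/-- `N₁ = C(n/2, n/4)²`, the common degree of the vertices of the distance graph. -/
def NN1 (n : ℕ) : ℕ := ((n / 2).choose (n / 4)) ^ 2

/-- Bernoulli measure on `Bool` with parameter `p` (clipped to `[0,1]`). -/
noncomputable def bern (p : ℝ) : Measure Bool :=
  (PMF.bernoulli (min (Real.toNNReal p) 1) (min_le_right _ _)).toMeasure

instance (p : ℝ) : SigmaFinite (bern p) := by unfold bern; infer_instance

/-- The law of the random distance graph `G_p`: each (potential) edge is kept
independently with probability `p`. -/
noncomputable def gpMeasure (n : ℕ) (p : ℝ) : Measure (Sym2 (DV n) → Bool) :=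
  Measure.pi fun _ => bern p

/-- The random spanning subgraph of the distance graph determined by the coin flips `ω`. -/
def randSubgraph (n : ℕ) (ω : Sym2 (DV n) → Bool) : SimpleGraph (DV n) where
  Adj x y := (distGraph n).Adj x y ∧ ω s(x, y) = true
  symm := ⟨fun x y h => ⟨(distGraph n).adj_symm h.1, by rw [Sym2.eq_swap]; exact h.2⟩⟩
  loopless := ⟨fun x h => (distGraph n).loopless.irrefl x h.1⟩

/-- `G` contains a subgraph isomorphic to `F` (a copy of `F`). -/
def ContainsCopy {α β : Type} (F : SimpleGraph α) (G : SimpleGraph β) : Prop :=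
  ∃ f : α → β, Function.Injective f ∧ ∀ ⦃a b⦄, F.Adj a b → G.Adj (f a) (f b)

/-- `X_F`: the number of subgraphs of `G` isomorphic to `F`. -/
noncomputable def copyCount {α β : Type} (F : SimpleGraph α) (G : SimpleGraph β) : ℕ :=
  Nat.card {H : G.Subgraph // Nonempty (F ≃g H.coe)}

/-- The number of monomorphisms (injective graph homomorphisms) of `F` into `G`. -/
noncomputable def monoCount {α β : Type} (F : SimpleGraph α) (G : SimpleGraph β) : ℕ :=
  Nat.card {f : α → β // Function.Injective f ∧ ∀ ⦃a b⦄, F.Adj a b → G.Adj (f a) (f b)}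

/-- Maximal density `ρ^max(F)`: the maximum of `e(H)/v(H)` over nonempty subgraphs `H ⊆ F`. -/
noncomputable def rhoMax {α : Type} [Fintype α] (F : SimpleGraph α) : ℝ :=
  ⨆ H : {H : F.Subgraph // H.verts.Nonempty},
    (H.1.edgeSet.ncard : ℝ) / (H.1.verts.ncard : ℝ)

/-- `F` is strictly balanced: `e(H)/v(H) < e(F)/v(F)` for every proper nonempty subgraph. -/
def StrictlyBalanced {α : Type} [Fintype α] (F : SimpleGraph α) : Prop :=
  ∀ H : F.Subgraph, H.verts.Nonempty → H ≠ ⊤ →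
    H.edgeSet.ncard * Fintype.card α < F.edgeSet.ncard * H.verts.ncard

/-- If `F` is strictly balanced with `k` vertices and `l` edges,
`B ≅ F`, `V(A) ∩ V(B) ≠ ∅` and exactly `t` vertices of `B` are outside `V(A)`
(`1 ≤ t < k`), then `k·e(A ∪ B) ≥ k·e(A) + t·l + 1`. -/
theorem stmt12 {α γ : Type} [Fintype α] [Fintype γ] (F : SimpleGraph α)
    (k l : ℕ) (hk : Fintype.card α = k) (hl : F.edgeSet.ncard = l)
    (hbal : StrictlyBalanced F) (G : SimpleGraph γ) (A B : G.Subgraph)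
    (hB : Nonempty (F ≃g B.coe)) (hmeet : (A.verts ∩ B.verts).Nonempty)
    (t : ℕ) (ht : (B.verts \ A.verts).ncard = t) (ht1 : 1 ≤ t) (htk : t < k) :
    k * A.edgeSet.ncard + t * l + 1 ≤ k * (A ⊔ B).edgeSet.ncard := by
  classical
  obtain ⟨e⟩ := hB
  set φ : α → γ := fun a => (e a : γ) with hφ
  have hφinj : Function.Injective φ := fun a b hab => e.toEquiv.injective (Subtype.val_injective hab)
  have hφrange : Set.range φ = B.verts := by
    ext x
    constructor
    · rintro ⟨a, rfl⟩; exact (e a).2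
    · intro hx; exact ⟨e.symm ⟨x, hx⟩, congrArg Subtype.val (e.apply_symm_apply ⟨x, hx⟩)⟩
  have hψinj : Function.Injective (Sym2.map φ) := Sym2.map.injective hφinj
  -- B.Adj in terms of F.Adj
  have hadjB : ∀ x y : γ, B.Adj x y ↔ ∃ a b : α, F.Adj a b ∧ φ a = x ∧ φ b = y := by
    intro x y
    constructor
    · intro hxy
      have hx : x ∈ B.verts := B.edge_vert hxy
      have hy : y ∈ B.verts := B.edge_vert hxy.symm
      refine ⟨e.symm ⟨x, hx⟩, e.symm ⟨y, hy⟩, ?_, ?_, ?_⟩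
      · have h' : B.coe.Adj ⟨x, hx⟩ ⟨y, hy⟩ := hxy
        exact e.symm.map_rel_iff.mpr h'
      · exact congrArg Subtype.val (e.apply_symm_apply ⟨x, hx⟩)
      · exact congrArg Subtype.val (e.apply_symm_apply ⟨y, hy⟩)
    · rintro ⟨a, b, hab, rfl, rfl⟩
      exact e.map_rel_iff.mpr hab
  -- the subgraph H of F induced on the vertices mapping into A.verts
  set H : F.Subgraph :=
    { verts := φ ⁻¹' A.verts
      Adj := fun a b => F.Adj a b ∧ φ a ∈ A.verts ∧ φ b ∈ A.verts
      adj_sub := fun h => h.1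
      edge_vert := fun h => h.2.1
      symm := ⟨fun a b h => ⟨h.1.symm, h.2.2, h.2.1⟩⟩ } with hHdef
  -- edge set facts
  have hBedge : B.edgeSet = Sym2.map φ '' F.edgeSet := by
    ext s
    induction s using Sym2.inductionOn with
    | hf x y =>
      simp only [SimpleGraph.Subgraph.mem_edgeSet, Set.mem_image]
      constructor
      · intro hxy
        obtain ⟨a, b, hab, ha, hb⟩ := (hadjB x y).1 hxy
        exact ⟨s(a, b), hab, by rw [Sym2.map_pair_eq, ha, hb]⟩
      · rintro ⟨s, hs, hmap⟩
        induction s using Sym2.inductionOn with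
        | hf a b =>
          rw [Sym2.map_pair_eq, Sym2.eq_iff] at hmap
          rcases hmap with ⟨ha, hb⟩ | ⟨ha, hb⟩
          · exact (hadjB x y).2 ⟨a, b, hs, ha, hb⟩
          · exact (hadjB x y).2 ⟨b, a, hs.symm, hb, ha⟩
  have hinterEdge : B.edgeSet ∩ A.edgeSet ⊆ Sym2.map φ '' H.edgeSet := by
    intro s hs
    induction s using Sym2.inductionOn with
    | hf x y =>
      obtain ⟨hsB, hsA⟩ := hs
      rw [SimpleGraph.Subgraph.mem_edgeSet] at hsB hsA
      obtain ⟨a, b, hab, ha, hb⟩ := (hadjB x y).1 hsB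
      refine ⟨s(a, b), ?_, by rw [Sym2.map_pair_eq, ha, hb]⟩
      exact ⟨hab, by rw [ha]; exact A.edge_vert hsA, by rw [hb]; exact A.edge_vert hsA.symm⟩
  -- vertex counting
  haveI : Fintype γ := ‹_›
  have hBverts : B.verts.ncard = k := by
    rw [← hφrange, ← Set.image_univ, Set.ncard_image_of_injective _ hφinj,
      Set.ncard_univ, Nat.card_eq_fintype_card, hk]
  have hHimage : φ '' H.verts = B.verts ∩ A.verts := by
    rw [hHdef]
    simp only [Set.image_preimage_eq_inter_range, hφrange]
    exact Set.inter_comm _ _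
  have hHverts : H.verts.ncard = k - t := by
    have h1 : (B.verts ∩ A.verts).ncard + (B.verts \ A.verts).ncard = B.verts.ncard :=
      Set.ncard_inter_add_ncard_diff_eq_ncard B.verts A.verts (Set.toFinite _)
    have h2 : H.verts.ncard = (B.verts ∩ A.verts).ncard := by
      rw [← hHimage, Set.ncard_image_of_injective _ hφinj]
    omega
  -- H is nonempty and proper
  have hHne : H.verts.Nonempty := by
    obtain ⟨v, hvA, hvB⟩ := hmeet
    refine ⟨e.symm ⟨v, hvB⟩, ?_⟩
    show φ _ ∈ A.verts
    have : φ (e.symm ⟨v, hvB⟩) = v := congrArg Subtype.val (e.apply_symm_apply ⟨v, hvB⟩)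
    rw [this]; exact hvA
  have hHproper : H ≠ ⊤ := by
    have hne : (B.verts \ A.verts).Nonempty := by
      rw [← Set.ncard_pos (Set.toFinite _)] at *
      omega
    obtain ⟨w, hwB, hwA⟩ := hne
    intro hcon
    have : e.symm ⟨w, hwB⟩ ∈ H.verts := by rw [hcon]; trivial
    have hw : φ (e.symm ⟨w, hwB⟩) = w := congrArg Subtype.val (e.apply_symm_apply ⟨w, hwB⟩)
    exact hwA (by rw [← hw]; exact this)
  -- strict balance
  have hbalH := hbal H hHne hHproper
  rw [hk, hl, hHverts] at hbalH
  -- edge counting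
  have hBl : B.edgeSet.ncard = l := by
    rw [hBedge, Set.ncard_image_of_injective _ hψinj, hl]
  have hsup : (A ⊔ B).edgeSet.ncard = A.edgeSet.ncard + (B.edgeSet \ A.edgeSet).ncard := by
    rw [SimpleGraph.Subgraph.edgeSet_sup,
      ← Set.ncard_union_eq Set.disjoint_sdiff_right (Set.toFinite _) (Set.toFinite _),
      Set.union_diff_self]
  have hsplit : (B.edgeSet ∩ A.edgeSet).ncard + (B.edgeSet \ A.edgeSet).ncard = l := by
    rw [← hBl]
    exact Set.ncard_inter_add_ncard_diff_eq_ncard B.edgeSet A.edgeSet (Set.toFinite _)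
  have hcount : (B.edgeSet ∩ A.edgeSet).ncard ≤ H.edgeSet.ncard := by
    calc (B.edgeSet ∩ A.edgeSet).ncard ≤ (Sym2.map φ '' H.edgeSet).ncard :=
          Set.ncard_le_ncard hinterEdge (Set.toFinite _)
      _ = H.edgeSet.ncard := Set.ncard_image_of_injective _ hψinj
  -- arithmetic
  set eH := H.edgeSet.ncard
  set m := (B.edgeSet \ A.edgeSet).ncard
  rw [hsup, Nat.mul_add]
  have key : t * l + 1 ≤ k * m := by
    have h1 : eH * k + 1 ≤ l * (k - t) := hbalH
    have h2 : l ≤ eH + m := by omega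
    have h3 : l * (k - t) + l * t = l * k := by
      rw [← Nat.mul_add, Nat.sub_add_cancel htk.le]
    have h4 : k * l ≤ k * eH + k * m := by
      calc k * l ≤ k * (eH + m) := Nat.mul_le_mul_left k h2
        _ = k * eH + k * m := Nat.mul_add k eH m
    have h5 : k * eH = eH * k := Nat.mul_comm k eH
    have h6 : k * l = l * k := Nat.mul_comm k l
    have h7 : t * l = l * t := Nat.mul_comm t l
    omega
  omega
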